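/- (Norm bound on the inverse capacitance matrix via a Schur complement.) Let à be an invertible n×n real matrix and U, V n×k real matrices with ‖U‖ ≤ γ and ‖V‖ ≤ γ, and assume à + UVᵀ is invertible. Then the capacitance matrix S = I + Vᵀ Ã⁻¹ U is invertible and ‖S⁻¹‖ ≤ (1 + γ)² · max(1, ‖(à + UVᵀ)⁻¹‖). -/

import Mathlib

open Matrix
open scoped Matrix.Norms.L2Operator

/-!
The inverse of the capacitance matrix is explicit: with `B = Ã + U Vᵀ`,
`(I + Vᵀ Ã⁻¹ U)⁻¹ = I - Vᵀ B⁻¹ U` (both are the top-left block of `[[I, Vᵀ], [U, -Ã]]⁻¹`,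
computed through the two Schur complements), which follows from `Ã⁻¹ - B⁻¹ = Ã⁻¹ U Vᵀ B⁻¹`.
Submultiplicativity of the spectral norm then gives
`‖S⁻¹‖ ≤ 1 + γ² ‖B⁻¹‖ ≤ (1 + γ)² max 1 ‖B⁻¹‖`.
-/

namespace Matrix

variable {m n α : Type*} [Fintype m] [DecidableEq m] [Fintype n] [DecidableEq n] [CommRing α]

theorem one_add_mul_inv_mul_mul_one_sub_mul_inv_mul_eq_one {A : Matrix n n α}
    (U : Matrix n m α) (W : Matrix m n α) (hA : IsUnit A) (hAUW : IsUnit (A + U * W)) :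
    (1 + W * A⁻¹ * U) * (1 - W * (A + U * W)⁻¹ * U) = 1 := by
  have hdiff := inv_sub_inv (iff_of_true hA hAUW)
  rw [add_sub_cancel_left] at hdiff
  calc (1 + W * A⁻¹ * U) * (1 - W * (A + U * W)⁻¹ * U)
      = 1 + W * (A⁻¹ - (A + U * W)⁻¹ - A⁻¹ * (U * W) * (A + U * W)⁻¹) * U := by
        simp only [Matrix.add_mul, Matrix.sub_mul, Matrix.mul_sub, Matrix.one_mul,
          Matrix.mul_one, Matrix.mul_assoc]
        abel
    _ = 1 := by rw [hdiff, sub_self, Matrix.mul_zero, Matrix.zero_mul, add_zero]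

variable {𝕜 : Type*} [RCLike 𝕜]

theorem l2_opNorm_one_le : ‖(1 : Matrix n n 𝕜)‖ ≤ 1 := by
  rw [← diagonal_one, l2_opNorm_diagonal]
  exact pi_norm_le_iff_of_nonneg zero_le_one |>.mpr fun _ => norm_one.le

theorem l2_opNorm_one_sub_mul_mul_le (W : Matrix m n 𝕜) (M : Matrix n n 𝕜)
    (U : Matrix n m 𝕜) : ‖1 - W * M * U‖ ≤ 1 + ‖W‖ * ‖M‖ * ‖U‖ :=
  calc ‖1 - W * M * U‖ ≤ ‖(1 : Matrix m m 𝕜)‖ + ‖W * M * U‖ := norm_sub_le _ _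
    _ ≤ 1 + ‖W‖ * ‖M‖ * ‖U‖ := by
      gcongr
      · exact l2_opNorm_one_le
      · grw [l2_opNorm_mul, l2_opNorm_mul]

theorem l2_opNorm_transpose (A : Matrix m n ℝ) : ‖Aᵀ‖ = ‖A‖ := by
  rw [← conjTranspose_eq_transpose_of_trivial, l2_opNorm_conjTranspose]

end Matrix

theorem one_add_mul_mul_le_sq_mul_max {γ b : ℝ} (hγ : 0 ≤ γ) :
    1 + γ * b * γ ≤ (1 + γ) ^ 2 * max 1 b := by
  have hb : b ≤ max 1 b := le_max_right 1 b
  have h1 : 1 ≤ max 1 b := le_max_left 1 b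
  calc 1 + γ * b * γ ≤ (1 + γ ^ 2) * max 1 b := by nlinarith [mul_nonneg hγ hγ]
    _ ≤ (1 + γ) ^ 2 * max 1 b := by gcongr; nlinarith

/-- Norm bound on the inverse capacitance matrix via a Schur complement. -/
theorem smw_capacitance_inverse_norm_bound {n k : ℕ} (γ : ℝ)
    (At : Matrix (Fin n) (Fin n) ℝ) (hAt : IsUnit At)
    (U V : Matrix (Fin n) (Fin k) ℝ) (hU : ‖U‖ ≤ γ) (hV : ‖V‖ ≤ γ)
    (hAUV : IsUnit (At + U * Vᵀ)) :
    IsUnit ((1 : Matrix (Fin k) (Fin k) ℝ) + Vᵀ * At⁻¹ * U) ∧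
      ‖((1 : Matrix (Fin k) (Fin k) ℝ) + Vᵀ * At⁻¹ * U)⁻¹‖ ≤
        (1 + γ) ^ 2 * max 1 ‖(At + U * Vᵀ)⁻¹‖ := by
  have hγ : 0 ≤ γ := (norm_nonneg U).trans hU
  have hinv := one_add_mul_inv_mul_mul_one_sub_mul_inv_mul_eq_one U Vᵀ hAt hAUV
  refine ⟨IsUnit.of_mul_eq_one _ hinv, ?_⟩
  rw [inv_eq_right_inv hinv]
  calc ‖1 - Vᵀ * (At + U * Vᵀ)⁻¹ * U‖ ≤ 1 + ‖Vᵀ‖ * ‖(At + U * Vᵀ)⁻¹‖ * ‖U‖ :=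
        l2_opNorm_one_sub_mul_mul_le _ _ _
    _ ≤ 1 + γ * ‖(At + U * Vᵀ)⁻¹‖ * γ := by rw [l2_opNorm_transpose]; gcongr
    _ ≤ (1 + γ) ^ 2 * max 1 ‖(At + U * Vᵀ)⁻¹‖ :=
        one_add_mul_mul_le_sq_mul_max hγ
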